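/- Let W ∈ ℝ^{n×m} with W = [W₁; W₂], W₁ ∈ ℝ^{m×m}, W₂ ∈ ℝ^{(n−m)×m} full rank, Ω ∈ ℝ^{ℓ×(n−m)} such that ΩW₂ is full rank, and Ψ = diag(I_m, Ω). Then there exist randomized Householder vectors u₁,…,u_m ∈ ℝ^n and an upper-triangular R ∈ ℝ^{m×m} such that W = P(u₁,Ψ)⋯P(u_m,Ψ)·[R; 0_{(n−m)×m}], and moreover ΨW = P(Ψu₁)⋯P(Ψu_m)·[R; 0_{ℓ×m}] is the classical Householder QR factorization of ΨW. In particular, the thin Q factor Q = P(u₁,Ψ)⋯P(u_m,Ψ)·[I_m; 0_{(n−m)×m}] satisfies (ΨQ)ᵀ(ΨQ) = I_m. -/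

import Mathlib

open Matrix

/-- The randomized Householder reflector `P(z, Ψ) = I - (2/‖Ψz‖²) z (Ψz)ᵀ Ψ`. -/
noncomputable def rhouse {ι κ : Type*} [Fintype ι] [Fintype κ] [DecidableEq κ]
    (Θ : Matrix ι κ ℝ) (z : κ → ℝ) : Matrix κ κ ℝ :=
  1 - (2 / ((Θ.mulVec z) ⬝ᵥ (Θ.mulVec z))) • (Matrix.vecMulVec z (Θ.mulVec z) * Θ)

/-- The classical Householder reflector `P(v) = I - (2/‖v‖²) v vᵀ`. -/
noncomputable def house {ι : Type*} [Fintype ι] [DecidableEq ι] (v : ι → ℝ) :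
    Matrix ι ι ℝ :=
  1 - (2 / (v ⬝ᵥ v)) • Matrix.vecMulVec v v

/-- Stack a matrix on top of a zero block: `[R; 0]`. -/
def padTop {α β γ : Type*} (R : Matrix α γ ℝ) : Matrix (α ⊕ β) γ ℝ :=
  Matrix.of fun i j => Sum.elim (fun a => R a j) (fun _ => 0) i

/-!
Householder QR of `W` is carried out for the semi-inner product `⟨x, y⟩ = (Ψx)ᵀ(Ψy)`, for which
`P(u, Ψ)` is the reflection along `u`; moreover `Ψ P(u, Ψ) = P(Ψu) Ψ`. Since `Ψ` is the identity on
the top block, at step `j` one can choose `u` so that `Ψu` is the classical Householder vector of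
column `j` of `ΨA`. Each randomized step on `W` is then mapped by `Ψ` to a classical step on `ΨW`,
so both factorizations share `R`, and `ΨQ = P(Ψu₁)⋯P(Ψu_m)[I; 0]` has orthonormal columns.
The sketches `Ψu_j` never vanish because `ΨW` has full column rank, which the orthogonal steps
preserve.
-/

theorem one_sub_two_div_smul_mul_self {K n : Type*} [Field K] [Fintype n] [DecidableEq n]
    {A : Matrix n n K} {s : K} (hs : s ≠ 0) (hA : A * A = s • A) :
    (1 - (2 / s) • A) * (1 - (2 / s) • A) = 1 := by
  have h : 2 / s * (2 / s) * s = 2 / s + 2 / s := by field_simp; ring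
  rw [sub_mul, mul_sub, mul_sub, one_mul, mul_one, one_mul, Matrix.mul_smul, Matrix.smul_mul, hA,
    smul_smul, smul_smul, h, add_smul]
  abel

section Householder

variable {ι σ : Type*} [Fintype ι] [DecidableEq ι] [Fintype σ]

theorem house_transpose (v : ι → ℝ) : (house v)ᵀ = house v := by
  simp [house, transpose_vecMulVec]

theorem house_mul_self {v : ι → ℝ} (hv : v ≠ 0) : house v * house v = 1 :=
  one_sub_two_div_smul_mul_self (mt dotProduct_self_eq_zero.mp hv)
    (by rw [vecMulVec_mul_vecMulVec, vecMulVec_smul])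

theorem house_mem_orthogonalGroup {v : ι → ℝ} (hv : v ≠ 0) :
    house v ∈ orthogonalGroup ι ℝ := by
  rw [mem_orthogonalGroup_iff', house_transpose, house_mul_self hv]

theorem rhouse_mul_self {Θ : Matrix σ ι ℝ} {z : ι → ℝ} (hz : Θ *ᵥ z ≠ 0) :
    rhouse Θ z * rhouse Θ z = 1 := by
  refine one_sub_two_div_smul_mul_self (mt dotProduct_self_eq_zero.mp hz) ?_
  rw [vecMulVec_mul, vecMulVec_mul_vecMulVec, ← dotProduct_mulVec, vecMulVec_smul]

theorem rhouse_mulVec (Θ : Matrix σ ι ℝ) (z y : ι → ℝ) :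
    rhouse Θ z *ᵥ y = y - (2 / ((Θ *ᵥ z) ⬝ᵥ (Θ *ᵥ z)) * ((Θ *ᵥ z) ⬝ᵥ (Θ *ᵥ y))) • z := by
  rw [rhouse, sub_mulVec, one_mulVec, smul_mulVec, ← mulVec_mulVec, vecMulVec_mulVec,
    op_smul_eq_smul, smul_smul]

theorem rhouse_mulVec_of_dotProduct_eq_zero {Θ : Matrix σ ι ℝ} {z y : ι → ℝ}
    (h : (Θ *ᵥ z) ⬝ᵥ (Θ *ᵥ y) = 0) : rhouse Θ z *ᵥ y = y := by
  rw [rhouse_mulVec, h, mul_zero, zero_smul, sub_zero]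

theorem rhouse_mulVec_eq_sub {Θ : Matrix σ ι ℝ} {z x : ι → ℝ} (hz : Θ *ᵥ z ≠ 0)
    (h : (Θ *ᵥ z) ⬝ᵥ (Θ *ᵥ z) = 2 * ((Θ *ᵥ z) ⬝ᵥ (Θ *ᵥ x))) : rhouse Θ z *ᵥ x = x - z := by
  have hx : (Θ *ᵥ z) ⬝ᵥ (Θ *ᵥ x) ≠ 0 := by
    intro h0
    rw [h0, mul_zero] at h
    exact hz (dotProduct_self_eq_zero.mp h)
  rw [rhouse_mulVec, h, show 2 / (2 * _) * _ = (1 : ℝ) by field_simp, one_smul]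

theorem mul_rhouse [DecidableEq σ] (Θ : Matrix σ ι ℝ) (z : ι → ℝ) :
    Θ * rhouse Θ z = house (Θ *ᵥ z) * Θ := by
  rw [rhouse, house, Matrix.mul_sub, Matrix.mul_one, Matrix.sub_mul, Matrix.one_mul,
    Matrix.mul_smul, Matrix.smul_mul, ← Matrix.mul_assoc, mul_vecMulVec]

theorem mul_list_prod_rhouse [DecidableEq σ] {β : Type*} (Θ : Matrix σ ι ℝ) (u : β → ι → ℝ)
    (L : List β) :
    Θ * (L.map fun t => rhouse Θ (u t)).prod = (L.map fun t => house (Θ *ᵥ u t)).prod * Θ := by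
  induction L with
  | nil => simp
  | cons t L ih =>
    simp only [List.map_cons, List.prod_cons]
    rw [← Matrix.mul_assoc, mul_rhouse, Matrix.mul_assoc, ih, Matrix.mul_assoc]

theorem mul_list_prod_rhouse_mul [DecidableEq σ] {β γ : Type*} (Θ : Matrix σ ι ℝ)
    (u : β → ι → ℝ) (L : List β) (B : Matrix ι γ ℝ) :
    Θ * ((L.map fun t => rhouse Θ (u t)).prod * B) =
      (L.map fun t => house (Θ *ᵥ u t)).prod * (Θ * B) := by
  rw [← Matrix.mul_assoc, mul_list_prod_rhouse, Matrix.mul_assoc]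

theorem list_prod_house_mem_orthogonalGroup [DecidableEq σ] {β : Type*} (v : β → σ → ℝ)
    (L : List β) (hv : ∀ t ∈ L, v t ≠ 0) :
    (L.map fun t => house (v t)).prod ∈ orthogonalGroup σ ℝ :=
  list_prod_mem (by simpa using fun t ht => house_mem_orthogonalGroup (hv t ht))

theorem injective_mulVec_mul_rhouse_mul [DecidableEq σ] {α : Type*} [Fintype α]
    {Θ : Matrix σ ι ℝ} {z : ι → ℝ} (hz : Θ *ᵥ z ≠ 0) {A : Matrix ι α ℝ}
    (hA : Function.Injective (Θ * A).mulVec) :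
    Function.Injective (Θ * (rhouse Θ z * A)).mulVec := by
  have hH : Function.LeftInverse (house (Θ *ᵥ z)).mulVec (house (Θ *ᵥ z)).mulVec := fun v => by
    rw [mulVec_mulVec, house_mul_self hz, one_mulVec]
  rw [← Matrix.mul_assoc, mul_rhouse, Matrix.mul_assoc]
  exact fun x y hxy => hA (hH.injective (by simpa only [mulVec_mulVec] using hxy))

end Householder

section Rank

variable {K ι n : Type*} [Field K] [Fintype n]

theorem Matrix.rank_eq_card_width_iff {A : Matrix ι n K} :
    A.rank = Fintype.card n ↔ Function.Injective A.mulVec := by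
  rw [mulVec_injective_iff, linearIndependent_iff_card_eq_finrank_span, rank_eq_finrank_span_cols,
    Set.finrank, eq_comm]

theorem Matrix.card_width_le_of_injective_mulVec {A : Matrix ι n K}
    (hA : Function.Injective A.mulVec) (s : Finset ι) (hs : ∀ i ∉ s, A i = 0) :
    Fintype.card n ≤ s.card := by
  rw [← rank_eq_card_width_iff.mpr hA]
  exact rank_le_card_of_support_subset A s fun i hi => by_contra fun h => hi (hs i h)

end Rank

section Rows

variable {m : ℕ} {κ : Type*}

def topRows (j : ℕ) : Finset (Fin m ⊕ κ) :=
  (Finset.univ.filter fun a : Fin m => (a : ℕ) < j).disjSum ∅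

@[simp]
theorem inl_mem_topRows {j : ℕ} {a : Fin m} :
    (Sum.inl a : Fin m ⊕ κ) ∈ topRows j ↔ (a : ℕ) < j := by
  simp [topRows]

@[simp]
theorem inr_notMem_topRows {j : ℕ} {b : κ} : (Sum.inr b : Fin m ⊕ κ) ∉ topRows j := by
  simp [topRows]

theorem card_topRows_le (j : ℕ) : (topRows j : Finset (Fin m ⊕ κ)).card ≤ j := by
  simp [topRows, Fin.card_filter_val_lt]

theorem topRows_mono {j j' : ℕ} (h : j ≤ j') : (topRows j : Finset (Fin m ⊕ κ)) ⊆ topRows j' := by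
  rintro (a | b) hi
  · simp only [inl_mem_topRows] at hi ⊢
    omega
  · simp at hi

end Rows

section LowerPart

variable {m : ℕ} {κ : Type*}

def lowerPart (j : ℕ) (x : Fin m ⊕ κ → ℝ) : Fin m ⊕ κ → ℝ :=
  Sum.elim (fun a => if (a : ℕ) < j then 0 else x (Sum.inl a)) (x ∘ Sum.inr)

theorem lowerPart_apply_of_mem {j : ℕ} (x : Fin m ⊕ κ → ℝ) {i : Fin m ⊕ κ}
    (hi : i ∈ topRows j) : lowerPart j x i = 0 := by
  rcases i with a | b <;> simp_all [lowerPart]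

theorem lowerPart_apply_of_notMem {j : ℕ} (x : Fin m ⊕ κ → ℝ) {i : Fin m ⊕ κ}
    (hi : i ∉ topRows j) : lowerPart j x i = x i := by
  rcases i with a | b <;> simp_all [lowerPart]

theorem lowerPart_eq_zero_iff {j : ℕ} {x : Fin m ⊕ κ → ℝ} :
    lowerPart j x = 0 ↔ ∀ i ∉ topRows j, x i = 0 := by
  refine ⟨fun h i hi => ?_, fun h => funext fun i => ?_⟩
  · rw [← lowerPart_apply_of_notMem x hi, h, Pi.zero_apply]
  · by_cases hi : i ∈ topRows j
    · exact lowerPart_apply_of_mem x hi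
    · rw [lowerPart_apply_of_notMem x hi, h i hi, Pi.zero_apply]

theorem lowerPart_eq_self_iff {j : ℕ} {x : Fin m ⊕ κ → ℝ} :
    lowerPart j x = x ↔ ∀ i ∈ topRows j, x i = 0 := by
  refine ⟨fun h i hi => ?_, fun h => funext fun i => ?_⟩
  · rw [← h, lowerPart_apply_of_mem x hi]
  · by_cases hi : i ∈ topRows j
    · rw [lowerPart_apply_of_mem x hi, h i hi]
    · exact lowerPart_apply_of_notMem x hi

theorem lowerPart_eq_zero_of_le {j j' : ℕ} {x : Fin m ⊕ κ → ℝ} (hx : lowerPart j x = 0)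
    (h : j ≤ j') : lowerPart j' x = 0 :=
  lowerPart_eq_zero_iff.mpr fun i hi =>
    lowerPart_eq_zero_iff.mp hx i fun hj => hi (topRows_mono h hj)

theorem lowerPart_succ_sub_lowerPart_add_single [DecidableEq κ] (j : Fin m) (x : Fin m ⊕ κ → ℝ)
    (c : ℝ) :
    lowerPart (j + 1) (x - lowerPart j x + Pi.single (Sum.inl j) c) = 0 := by
  refine lowerPart_eq_zero_iff.mpr fun i hi => ?_
  have hj : i ∉ topRows j := fun h => hi (topRows_mono (Nat.le_succ _) h)
  have hij : i ≠ Sum.inl j := by rintro rfl; simp at hi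
  rw [Pi.add_apply, Pi.sub_apply, lowerPart_apply_of_notMem _ hj,
    Pi.single_eq_of_ne hij, sub_self, add_zero]

variable [Fintype κ]

theorem dotProduct_eq_zero_of_lowerPart {j : ℕ} {w y : Fin m ⊕ κ → ℝ}
    (hw : lowerPart j w = w) (hy : lowerPart j y = 0) : w ⬝ᵥ y = 0 := by
  refine Finset.sum_eq_zero fun i _ => ?_
  by_cases hi : i ∈ topRows j
  · rw [lowerPart_eq_self_iff.mp hw i hi, zero_mul]
  · rw [lowerPart_eq_zero_iff.mp hy i hi, mul_zero]

theorem dotProduct_lowerPart {j : ℕ} {w : Fin m ⊕ κ → ℝ} (hw : lowerPart j w = w)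
    (y : Fin m ⊕ κ → ℝ) : w ⬝ᵥ lowerPart j y = w ⬝ᵥ y := by
  refine Finset.sum_congr rfl fun i _ => ?_
  by_cases hi : i ∈ topRows j
  · rw [lowerPart_eq_self_iff.mp hw i hi, zero_mul, zero_mul]
  · rw [lowerPart_apply_of_notMem y hi]

end LowerPart

section Sketch

variable {m : ℕ} {κ σ : Type*} [Fintype κ]

def blockSketch (m : ℕ) (Ω : Matrix σ κ ℝ) : Matrix (Fin m ⊕ σ) (Fin m ⊕ κ) ℝ :=
  fromBlocks 1 0 0 Ω

variable (Ω : Matrix σ κ ℝ)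

theorem blockSketch_mulVec (x : Fin m ⊕ κ → ℝ) :
    blockSketch m Ω *ᵥ x = Sum.elim (x ∘ Sum.inl) (Ω *ᵥ (x ∘ Sum.inr)) := by
  simp [blockSketch, fromBlocks_mulVec]

theorem blockSketch_mulVec_lowerPart (j : ℕ) (x : Fin m ⊕ κ → ℝ) :
    blockSketch m Ω *ᵥ lowerPart j x = lowerPart j (blockSketch m Ω *ᵥ x) := by
  rw [blockSketch_mulVec, blockSketch_mulVec]
  ext (a | b) <;> simp [lowerPart]

theorem blockSketch_mulVec_single [DecidableEq κ] [DecidableEq σ] (a : Fin m) (c : ℝ) :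
    blockSketch m Ω *ᵥ Pi.single (Sum.inl a) c = Pi.single (Sum.inl a) c := by
  rw [blockSketch_mulVec]
  have h : (Pi.single (Sum.inl a) c : Fin m ⊕ κ → ℝ) ∘ Sum.inr = 0 := funext fun b => by simp
  ext (a' | b) <;> simp [Pi.single_apply, h]

theorem blockSketch_mul_fromRows {γ : Type*} (R : Matrix (Fin m) γ ℝ) :
    blockSketch m Ω * fromRows R (0 : Matrix κ γ ℝ) = fromRows R 0 := by
  simp [blockSketch, fromBlocks_mul_fromRows]

end Sketch

section HouseholderVec

variable {m : ℕ} {σ : Type*} [Fintype σ]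

/-- The sign is opposite to that of `v_j`, so that the subtraction in `householderVec` does not
cancel: see `householderVec_ne_zero`. -/
noncomputable def householderShift (j : Fin m) (v : Fin m ⊕ σ → ℝ) : ℝ :=
  if 0 ≤ v (Sum.inl j) then -√(lowerPart j v ⬝ᵥ lowerPart j v)
  else √(lowerPart j v ⬝ᵥ lowerPart j v)

noncomputable def householderVec [DecidableEq σ] (j : Fin m) (v : Fin m ⊕ σ → ℝ) :
    Fin m ⊕ σ → ℝ :=
  lowerPart j v - householderShift j v • Pi.single (Sum.inl j) 1

variable (j : Fin m) (v : Fin m ⊕ σ → ℝ)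

theorem householderShift_mul_self :
    householderShift j v * householderShift j v = lowerPart j v ⬝ᵥ lowerPart j v := by
  have hS : 0 ≤ lowerPart j v ⬝ᵥ lowerPart j v := Finset.sum_nonneg fun i _ => mul_self_nonneg _
  have h := Real.mul_self_sqrt hS
  unfold householderShift
  split_ifs <;> simpa using h

theorem householderShift_mul_nonpos : householderShift j v * v (Sum.inl j) ≤ 0 := by
  have h := Real.sqrt_nonneg (lowerPart j v ⬝ᵥ lowerPart j v)
  unfold householderShift
  split_ifs <;> nlinarith

variable [DecidableEq σ]

theorem lowerPart_householderVec : lowerPart j (householderVec j v) = householderVec j v := by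
  rw [householderVec, lowerPart_eq_self_iff]
  intro i hi
  rw [Pi.sub_apply, lowerPart_apply_of_mem v hi, Pi.smul_apply,
    Pi.single_eq_of_ne (by rintro rfl; simp at hi), smul_zero, sub_zero]

theorem householderVec_dotProduct :
    householderVec j v ⬝ᵥ v =
      lowerPart j v ⬝ᵥ lowerPart j v - householderShift j v * v (Sum.inl j) := by
  rw [← dotProduct_lowerPart (lowerPart_householderVec j v), householderVec, sub_dotProduct,
    smul_dotProduct, single_dotProduct, one_mul, smul_eq_mul,
    lowerPart_apply_of_notMem v (by simp)]

theorem householderVec_dotProduct_self :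
    householderVec j v ⬝ᵥ householderVec j v = 2 * (householderVec j v ⬝ᵥ v) := by
  have hξ : lowerPart j v (Sum.inl j) = v (Sum.inl j) := lowerPart_apply_of_notMem v (by simp)
  rw [householderVec_dotProduct, householderVec]
  simp only [sub_dotProduct, dotProduct_sub, smul_dotProduct, dotProduct_smul, single_dotProduct,
    dotProduct_single, Pi.sub_apply, Pi.smul_apply, Pi.single_eq_same, hξ, smul_eq_mul]
  linear_combination householderShift_mul_self j v

theorem householderVec_ne_zero (hv : lowerPart j v ≠ 0) : householderVec j v ≠ 0 := by
  intro h
  have hS : 0 ≤ lowerPart j v ⬝ᵥ lowerPart j v := Finset.sum_nonneg fun i _ => mul_self_nonneg _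
  have hpos := lt_of_le_of_ne hS (Ne.symm (mt dotProduct_self_eq_zero.mp hv))
  have h0 := householderVec_dotProduct_self j v
  rw [householderVec_dotProduct, h, zero_dotProduct] at h0
  linarith [householderShift_mul_nonpos j v]

end HouseholderVec

def IsReducedUpTo {m : ℕ} {κ : Type*} (j : ℕ) (A : Matrix (Fin m ⊕ κ) (Fin m) ℝ) : Prop :=
  ∀ c : Fin m, (c : ℕ) < j → lowerPart (c + 1) (A.col c) = 0

section Reduction

variable {m : ℕ} {κ σ : Type*} [Fintype κ] (Ω : Matrix σ κ ℝ)

theorem blockSketch_mulVec_lowerPart_col_ne_zero {A : Matrix (Fin m ⊕ κ) (Fin m) ℝ} {j : Fin m}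
    (hA : IsReducedUpTo j A) (hinj : Function.Injective (blockSketch m Ω * A).mulVec) :
    blockSketch m Ω *ᵥ lowerPart j (A.col j) ≠ 0 := by
  -- Otherwise columns `0, …, j` of `ΨA` would be `j + 1` independent vectors supported on the
  -- `j` rows `topRows j`.
  intro h0
  have hcols : ∀ c : Fin m, c ≤ j → lowerPart j ((blockSketch m Ω * A).col c) = 0 := by
    intro c hc
    rw [show (blockSketch m Ω * A).col c = blockSketch m Ω *ᵥ A.col c from rfl,
      ← blockSketch_mulVec_lowerPart]
    rcases hc.lt_or_eq with hc | rfl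
    · rw [lowerPart_eq_zero_of_le (hA c hc) hc, mulVec_zero]
    · exact h0
  have hinj' :
      Function.Injective ((blockSketch m Ω * A).submatrix id (Fin.castLE j.isLt)).mulVec :=
    mulVec_injective_iff.mpr ((mulVec_injective_iff.mp hinj).comp _ (Fin.castLE_injective _))
  have hcard := card_width_le_of_injective_mulVec hinj' (topRows j) fun i hi => funext fun c =>
    lowerPart_eq_zero_iff.mp (hcols _ (Fin.le_iff_val_le_val.mpr (Nat.lt_succ_iff.mp c.isLt))) i hi
  rw [Fintype.card_fin] at hcard
  have := card_topRows_le (m := m) (κ := σ) j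
  omega

variable [DecidableEq κ] [Fintype σ]

noncomputable def sketchedHouseholderVec (j : Fin m) (x : Fin m ⊕ κ → ℝ) : Fin m ⊕ κ → ℝ :=
  lowerPart j x - householderShift j (blockSketch m Ω *ᵥ x) • Pi.single (Sum.inl j) 1

theorem blockSketch_mulVec_sketchedHouseholderVec [DecidableEq σ] (j : Fin m)
    (x : Fin m ⊕ κ → ℝ) :
    blockSketch m Ω *ᵥ sketchedHouseholderVec Ω j x =
      householderVec j (blockSketch m Ω *ᵥ x) := by
  rw [sketchedHouseholderVec, householderVec, mulVec_sub, mulVec_smul,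
    blockSketch_mulVec_lowerPart, blockSketch_mulVec_single]

theorem blockSketch_mulVec_sketchedHouseholderVec_ne_zero [DecidableEq σ] {j : Fin m}
    {x : Fin m ⊕ κ → ℝ} (hx : blockSketch m Ω *ᵥ lowerPart j x ≠ 0) :
    blockSketch m Ω *ᵥ sketchedHouseholderVec Ω j x ≠ 0 := by
  rw [blockSketch_mulVec_sketchedHouseholderVec]
  rw [blockSketch_mulVec_lowerPart] at hx
  exact householderVec_ne_zero j _ hx

theorem lowerPart_succ_sub_sketchedHouseholderVec (j : Fin m) (x : Fin m ⊕ κ → ℝ) :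
    lowerPart (j + 1) (x - sketchedHouseholderVec Ω j x) = 0 := by
  rw [sketchedHouseholderVec, ← Pi.single_smul', smul_eq_mul, mul_one, sub_sub_eq_add_sub,
    add_sub_right_comm]
  exact lowerPart_succ_sub_lowerPart_add_single j x _

end Reduction

section Iteration

variable {m : ℕ} {κ σ : Type*} [Fintype κ] [DecidableEq κ] [Fintype σ] (Ω : Matrix σ κ ℝ)

theorem isReducedUpTo_succ_rhouse_mul [DecidableEq σ] {A : Matrix (Fin m ⊕ κ) (Fin m) ℝ}
    {j : Fin m} (hA : IsReducedUpTo j A) (hx : blockSketch m Ω *ᵥ lowerPart j (A.col j) ≠ 0) :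
    IsReducedUpTo (j + 1)
      (rhouse (blockSketch m Ω) (sketchedHouseholderVec Ω j (A.col j)) * A) := by
  have hw := blockSketch_mulVec_sketchedHouseholderVec Ω j (A.col j)
  intro c hc
  change lowerPart (c + 1) (rhouse _ _ *ᵥ A.col c) = 0
  rcases (Nat.lt_succ_iff.mp hc).lt_or_eq with hc | hc
  · have hcj : lowerPart j (blockSketch m Ω *ᵥ A.col c) = 0 := by
      rw [← blockSketch_mulVec_lowerPart, lowerPart_eq_zero_of_le (hA c hc) hc, mulVec_zero]
    rw [rhouse_mulVec_of_dotProduct_eq_zero (by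
      rw [hw]; exact dotProduct_eq_zero_of_lowerPart (lowerPart_householderVec _ _) hcj)]
    exact hA c hc
  · obtain rfl : c = j := Fin.ext hc
    rw [rhouse_mulVec_eq_sub (blockSketch_mulVec_sketchedHouseholderVec_ne_zero Ω hx)
      (by rw [hw]; exact householderVec_dotProduct_self _ _)]
    exact lowerPart_succ_sub_sketchedHouseholderVec Ω c _

variable (W : Matrix (Fin m ⊕ κ) (Fin m) ℝ)

noncomputable def rhqrIterate : ℕ → Matrix (Fin m ⊕ κ) (Fin m) ℝ
  | 0 => W
  | j + 1 =>
    if h : j < m then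
      rhouse (blockSketch m Ω)
        (sketchedHouseholderVec Ω ⟨j, h⟩ ((rhqrIterate j).col ⟨j, h⟩)) * rhqrIterate j
    else rhqrIterate j

noncomputable def rhqrVec (j : Fin m) : Fin m ⊕ κ → ℝ :=
  sketchedHouseholderVec Ω j ((rhqrIterate Ω W j).col j)

theorem rhqrIterate_succ (j : Fin m) :
    rhqrIterate Ω W (j + 1) = rhouse (blockSketch m Ω) (rhqrVec Ω W j) * rhqrIterate Ω W j := by
  rw [rhqrIterate, dif_pos j.isLt]
  rfl

variable {Ω W} [DecidableEq σ]

theorem isReducedUpTo_rhqrIterate (hW : Function.Injective (blockSketch m Ω * W).mulVec) {j : ℕ}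
    (hj : j ≤ m) : IsReducedUpTo j (rhqrIterate Ω W j) ∧
      Function.Injective (blockSketch m Ω * rhqrIterate Ω W j).mulVec := by
  induction j with
  | zero => exact ⟨fun c hc => absurd hc (Nat.not_lt_zero _), hW⟩
  | succ j ih =>
    obtain ⟨hred, hinj⟩ := ih (Nat.le_of_succ_le hj)
    have hx := blockSketch_mulVec_lowerPart_col_ne_zero Ω (j := ⟨j, hj⟩) hred hinj
    rw [rhqrIterate_succ Ω W ⟨j, hj⟩]
    exact ⟨isReducedUpTo_succ_rhouse_mul Ω hred hx,
      injective_mulVec_mul_rhouse_mul (blockSketch_mulVec_sketchedHouseholderVec_ne_zero Ω hx) hinj⟩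

theorem blockSketch_mulVec_rhqrVec_ne_zero (hW : Function.Injective (blockSketch m Ω * W).mulVec)
    (j : Fin m) : blockSketch m Ω *ᵥ rhqrVec Ω W j ≠ 0 :=
  let ⟨hred, hinj⟩ := isReducedUpTo_rhqrIterate hW j.isLt.le
  blockSketch_mulVec_sketchedHouseholderVec_ne_zero Ω
    (blockSketch_mulVec_lowerPart_col_ne_zero Ω hred hinj)

theorem list_prod_take_rhouse_mul_rhqrIterate
    (hW : Function.Injective (blockSketch m Ω * W).mulVec) {j : ℕ} (hj : j ≤ m) :
    (((List.finRange m).map fun t => rhouse (blockSketch m Ω) (rhqrVec Ω W t)).take j).prod *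
      rhqrIterate Ω W j = W := by
  induction j with
  | zero => simp [rhqrIterate]
  | succ j ih =>
    rw [List.prod_take_succ _ _ (by simpa using hj), List.getElem_map, List.getElem_finRange,
      Fin.cast_mk, rhqrIterate_succ Ω W ⟨j, hj⟩, Matrix.mul_assoc, ← Matrix.mul_assoc (rhouse _ _),
      rhouse_mul_self (blockSketch_mulVec_rhqrVec_ne_zero hW _), Matrix.one_mul]
    exact ih (Nat.le_of_succ_le hj)

theorem list_prod_rhouse_mul_rhqrIterate
    (hW : Function.Injective (blockSketch m Ω * W).mulVec) :
    ((List.finRange m).map fun t => rhouse (blockSketch m Ω) (rhqrVec Ω W t)).prod *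
      rhqrIterate Ω W m = W := by
  simpa [List.take_of_length_le] using list_prod_take_rhouse_mul_rhqrIterate hW le_rfl

end Iteration

section Assembly

variable {m : ℕ} {κ : Type*}

theorem IsReducedUpTo.toRows₂_eq_zero {A : Matrix (Fin m ⊕ κ) (Fin m) ℝ}
    (h : IsReducedUpTo m A) : A.toRows₂ = 0 := by
  ext b c
  exact lowerPart_eq_zero_iff.mp (h c c.isLt) (Sum.inr b) (by simp)

theorem IsReducedUpTo.blockTriangular_toRows₁ {A : Matrix (Fin m ⊕ κ) (Fin m) ℝ}
    (h : IsReducedUpTo m A) : A.toRows₁.BlockTriangular id := fun a c hca =>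
  lowerPart_eq_zero_iff.mp (h c c.isLt) (Sum.inl a) (by simpa using hca)

theorem padTop_eq_fromRows {α γ : Type*} (R : Matrix α γ ℝ) :
    padTop (β := κ) R = fromRows R 0 := by
  ext (a | b) j <;> rfl

theorem fromRows_zero_transpose_mul_fromRows_zero {α γ δ : Type*} [Fintype α] [Fintype κ]
    (R : Matrix α γ ℝ) (S : Matrix α δ ℝ) :
    (fromRows R (0 : Matrix κ γ ℝ))ᵀ * fromRows S (0 : Matrix κ δ ℝ) = Rᵀ * S := by
  rw [transpose_fromRows, fromCols_mul_fromRows, transpose_zero, Matrix.zero_mul, add_zero]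

theorem injective_mulVec_blockSketch_mul {σ n : Type*} [Fintype κ] [Fintype n]
    (Ω : Matrix σ κ ℝ) (W : Matrix (Fin m ⊕ κ) n ℝ)
    (h : Function.Injective (Ω * W.submatrix Sum.inr id).mulVec) :
    Function.Injective (blockSketch m Ω * W).mulVec := fun x y hxy => by
  have := congrArg (· ∘ Sum.inr) hxy
  simp only [← mulVec_mulVec, blockSketch_mulVec, Sum.elim_comp_inr] at this
  exact h (by rw [← mulVec_mulVec, ← mulVec_mulVec]; exact this)

end Assembly

theorem rhqr_exists_general (m k l : ℕ) (W : Matrix (Fin m ⊕ Fin k) (Fin m) ℝ)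
    (Ω : Matrix (Fin l) (Fin k) ℝ)
    (hΩW2 : (Ω * W.submatrix Sum.inr id).rank = m) :
    let Ψ : Matrix (Fin m ⊕ Fin l) (Fin m ⊕ Fin k) ℝ := Matrix.fromBlocks 1 0 0 Ω
    ∃ (u : Fin m → (Fin m ⊕ Fin k) → ℝ) (R : Matrix (Fin m) (Fin m) ℝ),
      R.BlockTriangular (id : Fin m → Fin m) ∧
      (∀ j, Ψ.mulVec (u j) ≠ 0) ∧
      W = (((List.finRange m).map fun j => rhouse Ψ (u j)).prod) *
            padTop (β := Fin k) R ∧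
      Ψ * W = (((List.finRange m).map fun j => house (Ψ.mulVec (u j))).prod) *
            padTop (β := Fin l) R ∧
      (Ψ * ((((List.finRange m).map fun j => rhouse Ψ (u j)).prod) *
            padTop (β := Fin k) (1 : Matrix (Fin m) (Fin m) ℝ)))ᵀ *
          (Ψ * ((((List.finRange m).map fun j => rhouse Ψ (u j)).prod) *
            padTop (β := Fin k) (1 : Matrix (Fin m) (Fin m) ℝ))) = 1 := by
  intro Ψ
  rw [show Ψ = blockSketch m Ω from rfl]
  have hW := injective_mulVec_blockSketch_mul Ω W
    (rank_eq_card_width_iff.mp (by rw [hΩW2, Fintype.card_fin]))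
  have hu := blockSketch_mulVec_rhqrVec_ne_zero hW
  have hred := (isReducedUpTo_rhqrIterate hW le_rfl).1
  have hfactor := list_prod_rhouse_mul_rhqrIterate hW
  rw [← fromRows_toRows (rhqrIterate Ω W m), hred.toRows₂_eq_zero] at hfactor
  set R := (rhqrIterate Ω W m).toRows₁
  have horth := (mem_orthogonalGroup_iff' _ ℝ).mp <|
    list_prod_house_mem_orthogonalGroup _ (List.finRange m) fun j _ => hu j
  simp only [padTop_eq_fromRows]
  refine ⟨rhqrVec Ω W, R, hred.blockTriangular_toRows₁, hu, hfactor.symm, ?_, ?_⟩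
  · conv_lhs => rw [← hfactor]
    rw [mul_list_prod_rhouse_mul, blockSketch_mul_fromRows]
  · rw [mul_list_prod_rhouse_mul, blockSketch_mul_fromRows, transpose_mul, Matrix.mul_assoc,
      ← Matrix.mul_assoc _ _ (fromRows 1 _), horth, Matrix.one_mul,
      fromRows_zero_transpose_mul_fromRows_zero, transpose_one, Matrix.one_mul]

/-- simultaneous factorizations: if `W = [W₁; W₂]` with `W₂` full rank and
`ΩW₂` full rank, then there exist randomized Householder vectors `u₁,…,u_m` and an
upper-triangular `R` with `W = P(u₁,Ψ)⋯P(u_m,Ψ)·[R;0]`, while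
`ΨW = P(Ψu₁)⋯P(Ψu_m)·[R;0]` is the classical Householder QR factorization of `ΨW`,
and the thin Q factor `Q = P(u₁,Ψ)⋯P(u_m,Ψ)·[I_m;0]` satisfies `(ΨQ)ᵀ(ΨQ) = I_m`. -/
theorem rhqr_exists (m k l : ℕ) (W : Matrix (Fin m ⊕ Fin k) (Fin m) ℝ)
    (Ω : Matrix (Fin l) (Fin k) ℝ)
    (hW2 : (W.submatrix Sum.inr id).rank = m)
    (hΩW2 : (Ω * W.submatrix Sum.inr id).rank = m) :
    let Ψ : Matrix (Fin m ⊕ Fin l) (Fin m ⊕ Fin k) ℝ := Matrix.fromBlocks 1 0 0 Ω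
    ∃ (u : Fin m → (Fin m ⊕ Fin k) → ℝ) (R : Matrix (Fin m) (Fin m) ℝ),
      R.BlockTriangular (id : Fin m → Fin m) ∧
      (∀ j, Ψ.mulVec (u j) ≠ 0) ∧
      W = (((List.finRange m).map fun j => rhouse Ψ (u j)).prod) *
            padTop (β := Fin k) R ∧
      Ψ * W = (((List.finRange m).map fun j => house (Ψ.mulVec (u j))).prod) *
            padTop (β := Fin l) R ∧
      (Ψ * ((((List.finRange m).map fun j => rhouse Ψ (u j)).prod) *
            padTop (β := Fin k) (1 : Matrix (Fin m) (Fin m) ℝ)))ᵀ *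
          (Ψ * ((((List.finRange m).map fun j => rhouse Ψ (u j)).prod) *
            padTop (β := Fin k) (1 : Matrix (Fin m) (Fin m) ℝ))) = 1 :=
  rhqr_exists_general m k l W Ω hΩW2
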